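/- arXiv:1202.4412 — 3 statements merged into one kernel-verified Lean document; each statement's English description precedes it below -/
import Mathlib

section
/- Let p, q, g be positive integers with p > (2g−1)q. Then the number of integers i with 0 ≤ i ≤ p−1 such that for all integers s either ⌊(i+ps)/q⌋ ≥ g or ⌊(i+ps)/q⌋ ≤ −g, equals p − (2g−1)q. -/
/-- If `p > (2g-1)q`, then the number of `i ∈ {0, ..., p-1}` such that for all
integers `s` either `⌊(i+p*s)/q⌋ ≥ g` or `⌊(i+p*s)/q⌋ ≤ -g` equals `p - (2g-1)q`. -/
theorem first_kind_count (p q g : ℤ) (hp : 0 < p) (hq : 0 < q) (hg : 0 < g)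
    (hpq : (2 * g - 1) * q < p) :
    ({i : ℤ | 0 ≤ i ∧ i ≤ p - 1 ∧
        ∀ s : ℤ, g ≤ ⌊((i : ℚ) + p * s) / q⌋ ∨ ⌊((i : ℚ) + p * s) / q⌋ ≤ -g}.ncard : ℤ) =
      p - (2 * g - 1) * q := by
  classical
  have hq' : (0:ℚ) < (q:ℚ) := by exact_mod_cast hq
  -- floor reformulation
  have hfloor : ∀ n : ℤ, (g ≤ ⌊((n:ℚ)) / (q:ℚ)⌋ ∨ ⌊((n:ℚ)) / (q:ℚ)⌋ ≤ -g) ↔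
      (g * q ≤ n ∨ n < (1 - g) * q) := by
    intro n
    rw [Int.le_floor, show (⌊((n:ℚ)) / (q:ℚ)⌋ ≤ -g ↔ ⌊((n:ℚ)) / (q:ℚ)⌋ < -g + 1) from by omega,
      Int.floor_lt, le_div_iff₀ hq', div_lt_iff₀ hq']
    constructor
    · rintro (h | h)
      · left; exact_mod_cast h
      · right
        have : (n:ℚ) < (1 - g) * q := by push_cast at h ⊢; linarith
        exact_mod_cast this
    · rintro (h | h)
      · left; exact_mod_cast h
      · right
        have : (n:ℚ) < (1 - (g:ℚ)) * q := by exact_mod_cast h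
        push_cast
        linarith
  set I : Finset ℤ := Finset.Ico ((1 - g) * q) (g * q) with hI
  set B : Finset ℤ := I.image (· % p) with hB
  have hmem : ∀ i : ℤ, (0 ≤ i ∧ i ≤ p - 1 ∧
      ∀ s : ℤ, g ≤ ⌊((i : ℚ) + p * s) / q⌋ ∨ ⌊((i : ℚ) + p * s) / q⌋ ≤ -g) ↔
      i ∈ Finset.Ico (0:ℤ) p \ B := by
    intro i
    rw [Finset.mem_sdiff, Finset.mem_Ico]
    have hcast : ∀ s : ℤ, ((i:ℚ) + p * s) / q = ((i + p * s : ℤ) : ℚ) / q := by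
      intro s; push_cast; ring_nf
    constructor
    · rintro ⟨h0, h1, hall⟩
      refine ⟨⟨h0, by omega⟩, ?_⟩
      intro hiB
      rw [hB, Finset.mem_image] at hiB
      obtain ⟨j, hj, hjp⟩ := hiB
      rw [hI, Finset.mem_Ico] at hj
      have key := hall (j / p)
      rw [hcast, hfloor] at key
      have hij : i + p * (j / p) = j := by
        have := Int.emod_add_mul_ediv j p
        omega
      rw [hij] at key
      omega
    · rintro ⟨⟨h0, h1⟩, hnB⟩
      refine ⟨h0, by omega, ?_⟩
      intro s
      rw [hcast, hfloor]
      by_contra hcon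
      push_neg at hcon
      apply hnB
      rw [hB, Finset.mem_image]
      refine ⟨i + p * s, ?_, ?_⟩
      · rw [hI, Finset.mem_Ico]; omega
      · show (i + p * s) % p = i
        rw [Int.add_mul_emod_self_left, Int.emod_eq_of_lt h0 h1]
  have hSet : {i : ℤ | 0 ≤ i ∧ i ≤ p - 1 ∧
      ∀ s : ℤ, g ≤ ⌊((i : ℚ) + p * s) / q⌋ ∨ ⌊((i : ℚ) + p * s) / q⌋ ≤ -g} =
      ↑(Finset.Ico (0:ℤ) p \ B) := by
    ext i
    rw [Set.mem_setOf_eq, Finset.coe_sdiff, Set.mem_diff]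
    rw [hmem i, Finset.mem_sdiff]
    simp
  rw [hSet, Set.ncard_coe_finset]
  have hBsub : B ⊆ Finset.Ico 0 p := by
    intro x hx
    rw [hB, Finset.mem_image] at hx
    obtain ⟨j, _, rfl⟩ := hx
    rw [Finset.mem_Ico]
    exact ⟨Int.emod_nonneg j hp.ne', Int.emod_lt_of_pos j hp⟩
  rw [Finset.card_sdiff_of_subset hBsub]
  have h2g : 0 ≤ (2 * g - 1) * q := by
    apply mul_nonneg _ hq.le
    omega
  have hBcard : B.card = ((2 * g - 1) * q).toNat := by
    rw [hB, Finset.card_image_of_injOn, hI, Int.card_Ico]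
    · congr 1; ring
    · intro a ha b hb hab
      simp only at hab
      rw [hI, Finset.coe_Ico, Set.mem_Ico] at ha hb
      have hdvd : p ∣ b - a := Int.ModEq.dvd hab
      have : b - a = 0 := by
        refine Int.eq_zero_of_abs_lt_dvd hdvd ?_
        rw [abs_lt]
        constructor <;> nlinarith
      omega
  rw [hBcard, Int.card_Ico]
  omega
end

section
/- Let p, q, g be positive integers and let i be an integer with 0 ≤ i ≤ p−1. If it is not the case that for all integers s either ⌊(i+ps)/q⌋ ≥ g or ⌊(i+ps)/q⌋ ≤ −g, and if moreover p > (2g−1)q, then there exists exactly one integer s₀ such that −g < ⌊(i+ps₀)/q⌋ < g. -/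
/-- If `p > (2g-1)q` and `i ∈ {0, ..., p-1}` is not of the first kind, then there
is exactly one integer `s₀` with `-g < ⌊(i+p*s₀)/q⌋ < g`. -/
theorem second_kind_unique (p q g i : ℤ) (hp : 0 < p) (hq : 0 < q) (hg : 0 < g)
    (hi0 : 0 ≤ i) (hi1 : i ≤ p - 1)
    (hnot : ¬ ∀ s : ℤ, g ≤ ⌊((i : ℚ) + p * s) / q⌋ ∨ ⌊((i : ℚ) + p * s) / q⌋ ≤ -g)
    (hpq : (2 * g - 1) * q < p) :
    ∃! s₀ : ℤ, -g < ⌊((i : ℚ) + p * s₀) / q⌋ ∧ ⌊((i : ℚ) + p * s₀) / q⌋ < g := by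
  push_neg at hnot
  obtain ⟨s, hs1, hs2⟩ := hnot
  have hq' : (0 : ℚ) < (q : ℚ) := by exact_mod_cast hq
  have hp' : (0 : ℚ) < (p : ℚ) := by exact_mod_cast hp
  have key : ∀ a b : ℤ, a < b →
      -g < ⌊((i : ℚ) + p * a) / q⌋ → ⌊((i : ℚ) + p * b) / q⌋ < g → False := by
    intro a b hab ha hb
    set A : ℚ := ((i : ℚ) + p * a) / q with hA
    set B : ℚ := ((i : ℚ) + p * b) / q with hB
    have hdiff : B - A = (p : ℚ) * ((b : ℚ) - a) / q := by
      rw [hA, hB]; field_simp; ring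
    have hba : (1 : ℚ) ≤ (b : ℚ) - a := by
      exact_mod_cast (by omega : (1 : ℤ) ≤ b - a)
    have hdge : (p : ℚ) / q ≤ B - A := by
      rw [hdiff]
      exact (div_le_div_iff_of_pos_right hq').mpr (by nlinarith)
    have hpqr : (2 * (g : ℚ) - 1) < (p : ℚ) / q := by
      rw [lt_div_iff₀ hq']
      exact_mod_cast hpq
    have hBfl : B - 1 < (⌊B⌋ : ℚ) := Int.sub_one_lt_floor B
    have hAfl : (⌊A⌋ : ℚ) ≤ A := Int.floor_le A
    have hAge : (-(g : ℚ) + 1) ≤ (⌊A⌋ : ℚ) := by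
      have : -g + 1 ≤ ⌊A⌋ := by omega
      exact_mod_cast this
    have : ((g : ℚ) - 1) < (⌊B⌋ : ℚ) := by linarith
    have : (g : ℤ) - 1 < ⌊B⌋ := by exact_mod_cast this
    omega
  refine ⟨s, ⟨hs2, hs1⟩, fun t ht => ?_⟩
  by_contra hne
  rcases lt_or_gt_of_ne hne with h | h
  · exact key t s h ht.1 hs1
  · exact key s t h hs2 ht.2
end

section
/- Let n be a positive integer, p = 4n+1, q = n, g = 1. Then p and q are coprime, p − (2g−1)q = 3n+1, and the number of integers i with 0 ≤ i ≤ p−1 such that for all s ∈ ℤ either ⌊(i+ps)/q⌋ ≥ 1 or ⌊(i+ps)/q⌋ ≤ −1 equals 3n+1. -/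
/-- For `p = 4n+1`, `q = n`, `g = 1`: `p` and `q` are coprime,
`p - (2g-1)q = 3n+1`, and the number of first-kind residues equals `3n+1`. -/
theorem figure_eight_count (n : ℤ) (hn : 0 < n) :
    IsCoprime (4 * n + 1) n ∧
    (4 * n + 1) - (2 * 1 - 1) * n = 3 * n + 1 ∧
    (({i : ℤ | 0 ≤ i ∧ i ≤ (4 * n + 1) - 1 ∧
        ∀ s : ℤ, 1 ≤ ⌊((i : ℚ) + (4 * n + 1) * s) / n⌋ ∨
          ⌊((i : ℚ) + (4 * n + 1) * s) / n⌋ ≤ -1}.ncard : ℤ) = 3 * n + 1) := by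
  have hn' : (0 : ℚ) < (n : ℚ) := by exact_mod_cast hn
  refine ⟨⟨1, -4, by ring⟩, by ring, ?_⟩
  have hset : {i : ℤ | 0 ≤ i ∧ i ≤ (4 * n + 1) - 1 ∧
        ∀ s : ℤ, 1 ≤ ⌊((i : ℚ) + (4 * n + 1) * s) / n⌋ ∨
          ⌊((i : ℚ) + (4 * n + 1) * s) / n⌋ ≤ -1} = Set.Icc n (4 * n) := by
    ext i
    simp only [Set.mem_setOf_eq, Set.mem_Icc]
    constructor
    · rintro ⟨h0, h1, h2⟩
      refine ⟨?_, by linarith⟩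
      by_contra h
      push_neg at h
      rcases h2 0 with h3 | h3
      · have h4 : ((1 : ℤ) : ℚ) ≤ ((i : ℚ) + (4 * n + 1) * (0 : ℤ)) / n := Int.le_floor.mp h3
        norm_num at h4
        rw [one_le_div hn'] at h4
        have : (n : ℚ) < (n : ℚ) := lt_of_le_of_lt h4 (by exact_mod_cast h)
        exact lt_irrefl _ this
      · have h4 : (0 : ℚ) ≤ ((i : ℚ) + (4 * n + 1) * (0 : ℤ)) / n := by
          apply div_nonneg _ hn'.le
          push_cast
          have : (0 : ℚ) ≤ (i : ℚ) := by exact_mod_cast h0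
          linarith
        have := Int.floor_nonneg.mpr h4
        omega
    · rintro ⟨hlo, hhi⟩
      refine ⟨by linarith, by linarith, fun s => ?_⟩
      rcases le_or_gt 0 s with hs | hs
      · left
        rw [Int.le_floor]
        rw [show ((1 : ℤ) : ℚ) = 1 by norm_num, one_le_div hn']
        have h5 : n ≤ i + (4 * n + 1) * s := by nlinarith
        have : ((n : ℚ)) ≤ ((i + (4 * n + 1) * s : ℤ) : ℚ) := by exact_mod_cast h5
        push_cast at this
        linarith
      · right
        have hfl : ⌊((i : ℚ) + (4 * n + 1) * s) / n⌋ < 0 := by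
          rw [Int.floor_lt]
          push_cast
          apply div_neg_of_neg_of_pos _ hn'
          have h5 : i + (4 * n + 1) * s ≤ -1 := by nlinarith
          have : ((i + (4 * n + 1) * s : ℤ) : ℚ) ≤ -1 := by exact_mod_cast h5
          push_cast at this
          linarith
        omega
  rw [hset, ← Finset.coe_Icc, Set.ncard_coe_finset, Int.card_Icc]
  have : (0 : ℤ) ≤ 4 * n + 1 - n := by linarith
  rw [Int.toNat_of_nonneg this]
  ring
end
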